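/- Let (E, d_E) be a metric space with d_E(e, e') ≤ π for all e, e' ∈ E, and define D((r₁, e₁), (r₂, e₂)) = arccos( sin r₁ · sin r₂ + cos r₁ · cos r₂ · cos d_E(e₁, e₂) ) for r₁, r₂ ∈ [−π/2, π/2] and e₁, e₂ ∈ E. Then D satisfies the triangle inequality: for all r₁, r₂, r₃ ∈ [−π/2, π/2] and e₁, e₂, e₃ ∈ E, D((r₁, e₁), (r₃, e₃)) ≤ D((r₁, e₁), (r₂, e₂)) + D((r₂, e₂), (r₃, e₃)). -/

import Mathlib

/-!
Put the three points on the unit sphere of `ℝ³`, at latitudes `rᵢ` and longitudes `0`, `d₁₂` and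
`t = min (d₁₂ + d₂₃) π`. The suspension distance of two such points is the angle between them, so
the triangle inequality for angles bounds `D₁₃(t)` by `D₁₂(d₁₂) + D₂₃(t - d₁₂)`. Since the
latitudes lie in `[-π/2, π/2]`, `D` is monotone in the base distance on `[0, π]`, which turns
`d₁₃ ≤ t` and `t - d₁₂ ≤ d₂₃` into the claim.
-/

open Real InnerProductGeometry

noncomputable def sphericalSuspensionDist (r₁ r₂ d : ℝ) : ℝ :=
  arccos (sin r₁ * sin r₂ + cos r₁ * cos r₂ * cos d)

noncomputable def sphericalPoint (r θ : ℝ) : EuclideanSpace ℝ (Fin 3) :=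
  !₂[sin r, cos r * cos θ, cos r * sin θ]

lemma norm_sphericalPoint (r θ : ℝ) : ‖sphericalPoint r θ‖ = 1 := by
  rw [EuclideanSpace.norm_eq, Fin.sum_univ_three, Real.sqrt_eq_one]
  simp only [sphericalPoint, PiLp.toLp_apply, Matrix.cons_val_zero, Matrix.cons_val_one,
    Matrix.cons_val_two, Matrix.head_cons, Matrix.tail_cons, Real.norm_eq_abs, sq_abs]
  nlinarith [sin_sq_add_cos_sq r, sin_sq_add_cos_sq θ]

lemma inner_sphericalPoint (r₁ r₂ a b : ℝ) :
    inner ℝ (sphericalPoint r₁ a) (sphericalPoint r₂ b) =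
      sin r₁ * sin r₂ + cos r₁ * cos r₂ * cos (b - a) := by
  simp [sphericalPoint, EuclideanSpace.inner_toLp_toLp, cos_sub]
  ring

lemma angle_sphericalPoint (r₁ r₂ a b : ℝ) :
    angle (sphericalPoint r₁ a) (sphericalPoint r₂ b) = sphericalSuspensionDist r₁ r₂ (b - a) := by
  rw [angle, norm_sphericalPoint, norm_sphericalPoint, mul_one, div_one, inner_sphericalPoint,
    sphericalSuspensionDist]

lemma sphericalSuspensionDist_add_le (r₁ r₂ r₃ a b : ℝ) :
    sphericalSuspensionDist r₁ r₃ (a + b) ≤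
      sphericalSuspensionDist r₁ r₂ a + sphericalSuspensionDist r₂ r₃ b := by
  simpa only [angle_sphericalPoint, sub_zero, add_sub_cancel_left] using
    angle_le_angle_add_angle (sphericalPoint r₁ 0) (sphericalPoint r₂ a) (sphericalPoint r₃ (a + b))

lemma sphericalSuspensionDist_monotoneOn {r₁ r₂ : ℝ} (h : 0 ≤ cos r₁ * cos r₂) :
    MonotoneOn (sphericalSuspensionDist r₁ r₂) (Set.Icc 0 π) := fun _ hd _ hd' hdd' =>
  arccos_le_arccos <| add_le_add_right
    (mul_le_mul_of_nonneg_left (cos_le_cos_of_nonneg_of_le_pi hd.1 hd'.2 hdd') h) _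

lemma sphericalSuspensionDist_le_add {r₁ r₂ r₃ d₁₂ d₂₃ d₁₃ : ℝ}
    (hr₁ : 0 ≤ cos r₁) (hr₂ : 0 ≤ cos r₂) (hr₃ : 0 ≤ cos r₃)
    (h₁₂ : d₁₂ ∈ Set.Icc 0 π) (h₂₃ : d₂₃ ∈ Set.Icc 0 π) (h₁₃ : d₁₃ ∈ Set.Icc 0 π)
    (h : d₁₃ ≤ d₁₂ + d₂₃) :
    sphericalSuspensionDist r₁ r₃ d₁₃ ≤
      sphericalSuspensionDist r₁ r₂ d₁₂ + sphericalSuspensionDist r₂ r₃ d₂₃ := by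
  set t := min (d₁₂ + d₂₃) π
  have ht_le : t ≤ d₁₂ + d₂₃ := min_le_left _ _
  have h₁₂_le : d₁₂ ≤ t := le_min (le_add_of_nonneg_right h₂₃.1) h₁₂.2
  have ht : t ∈ Set.Icc 0 π := ⟨h₁₂.1.trans h₁₂_le, min_le_right _ _⟩
  have ht₂₃ : t - d₁₂ ∈ Set.Icc 0 π := ⟨sub_nonneg.2 h₁₂_le, by linarith [h₂₃.2]⟩
  calc sphericalSuspensionDist r₁ r₃ d₁₃
      ≤ sphericalSuspensionDist r₁ r₃ (d₁₂ + (t - d₁₂)) := by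
        rw [add_sub_cancel]
        exact sphericalSuspensionDist_monotoneOn (mul_nonneg hr₁ hr₃) h₁₃ ht (le_min h h₁₃.2)
    _ ≤ sphericalSuspensionDist r₁ r₂ d₁₂ + sphericalSuspensionDist r₂ r₃ (t - d₁₂) :=
        sphericalSuspensionDist_add_le _ _ _ _ _
    _ ≤ sphericalSuspensionDist r₁ r₂ d₁₂ + sphericalSuspensionDist r₂ r₃ d₂₃ := by
        gcongr
        exact sphericalSuspensionDist_monotoneOn (mul_nonneg hr₂ hr₃) ht₂₃ h₂₃ (by linarith)

/-- The spherical suspension distance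
`D((r₁,e₁),(r₂,e₂)) = arccos (sin r₁ sin r₂ + cos r₁ cos r₂ cos (d_E(e₁,e₂)))`
on `[-π/2, π/2] × E`, for a metric space `E` of diameter at most `π`,
satisfies the triangle inequality. -/
theorem sphericalSuspension_triangle {E : Type*} [MetricSpace E]
    (hE : ∀ e e' : E, dist e e' ≤ π)
    (r₁ r₂ r₃ : ℝ)
    (h₁ : r₁ ∈ Set.Icc (-(π / 2)) (π / 2))
    (h₂ : r₂ ∈ Set.Icc (-(π / 2)) (π / 2))
    (h₃ : r₃ ∈ Set.Icc (-(π / 2)) (π / 2))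
    (e₁ e₂ e₃ : E) :
    arccos (sin r₁ * sin r₃ + cos r₁ * cos r₃ * cos (dist e₁ e₃)) ≤
      arccos (sin r₁ * sin r₂ + cos r₁ * cos r₂ * cos (dist e₁ e₂)) +
      arccos (sin r₂ * sin r₃ + cos r₂ * cos r₃ * cos (dist e₂ e₃)) :=
  sphericalSuspensionDist_le_add (cos_nonneg_of_mem_Icc h₁) (cos_nonneg_of_mem_Icc h₂)
    (cos_nonneg_of_mem_Icc h₃) ⟨dist_nonneg, hE e₁ e₂⟩ ⟨dist_nonneg, hE e₂ e₃⟩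
    ⟨dist_nonneg, hE e₁ e₃⟩ (dist_triangle e₁ e₂ e₃)
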